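/- arXiv:2406.10910 — 3 statements merged into one kernel-verified Lean document; each statement's English description precedes it below -/
import Mathlib

section
/- Fix n, and for each i = 1,…,n let ω_i > 0 be a real weight, B_i an m×m complex Hermitian positive definite matrix, C_i a d×d complex Hermitian positive definite matrix, and A_i an m×d complex matrix. Then for every choice of m×d complex matrices Y_1,…,Y_n, Σ_i ω_i · Re tr(2 A_iᴴ Y_i C_i − Y_iᴴ B_i Y_i C_i) ≤ Σ_i ω_i · Re tr(C_i A_iᴴ B_i⁻¹ A_i), and equality holds when Y_i = B_i⁻¹ A_i for every i. Consequently, the supremum over (Y_1,…,Y_n) of the left-hand side equals Σ_i ω_i · Re tr(C_i A_iᴴ B_i⁻¹ A_i). -/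
/-!
Completing the square: with `W = B⁻¹ A` (so that `A = B W`), each summand satisfies
`Re tr(2 Aᴴ Y C - Yᴴ B Y C) = Re tr(C Aᴴ B⁻¹ A) - Re tr((Y - W)ᴴ B (Y - W) C)`.
The subtracted trace is the trace of a product of two positive semidefinite matrices, hence
nonnegative, and it vanishes at `Y = W`.
-/

open Matrix
open scoped ComplexOrder

namespace Matrix

variable {𝕜 m n : Type*} [RCLike 𝕜] [Fintype m] [Fintype n]

open scoped MatrixOrder in
theorem PosSemidef.trace_mul_nonneg {M N : Matrix n n 𝕜} (hM : M.PosSemidef)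
    (hN : N.PosSemidef) : 0 ≤ (M * N).trace := by
  classical
  obtain ⟨X, rfl⟩ := CStarAlgebra.nonneg_iff_eq_star_mul_self.mp hN.nonneg
  -- `tr(M (Xᴴ X)) = tr(X M Xᴴ)`
  rw [star_eq_conjTranspose, ← Matrix.mul_assoc, trace_mul_cycle]
  exact (hM.mul_mul_conjTranspose_same X).trace_nonneg

theorem re_trace_conjTranspose_mul_mul_mul_comm {B : Matrix m m 𝕜} {C : Matrix n n 𝕜}
    (hB : B.IsHermitian) (hC : C.IsHermitian) (W Y : Matrix m n 𝕜) :
    RCLike.re (Yᴴ * B * W * C).trace = RCLike.re (Wᴴ * B * Y * C).trace := by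
  rw [← RCLike.conj_re, starRingEnd_apply, ← trace_conjTranspose]
  simp only [conjTranspose_mul, conjTranspose_conjTranspose, hB.eq, hC.eq, Matrix.mul_assoc]
  rw [trace_mul_comm]
  simp only [Matrix.mul_assoc]

theorem re_trace_two_smul_sub_eq_sub {B : Matrix m m 𝕜} {C : Matrix n n 𝕜}
    (hB : B.IsHermitian) (hC : C.IsHermitian) (W Y : Matrix m n 𝕜) :
    RCLike.re ((2 : 𝕜) • (Wᴴ * B * Y * C) - Yᴴ * B * Y * C).trace =
      RCLike.re (Wᴴ * B * W * C).trace - RCLike.re ((Y - W)ᴴ * B * (Y - W) * C).trace := by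
  have hcross := re_trace_conjTranspose_mul_mul_mul_comm hB hC W Y
  simp only [conjTranspose_sub, Matrix.sub_mul, Matrix.mul_sub, trace_sub, trace_smul, map_sub,
    smul_eq_mul, RCLike.ofNat_mul_re] at hcross ⊢
  linarith

variable [DecidableEq m]

theorem re_trace_two_smul_sub_eq_sub_inv_mul {B : Matrix m m 𝕜} {C : Matrix n n 𝕜}
    (hB : B.IsHermitian) (hB' : IsUnit B) (hC : C.IsHermitian) (A Y : Matrix m n 𝕜) :
    RCLike.re ((2 : 𝕜) • (Aᴴ * Y * C) - Yᴴ * B * Y * C).trace =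
      RCLike.re (C * Aᴴ * B⁻¹ * A).trace -
        RCLike.re ((Y - B⁻¹ * A)ᴴ * B * (Y - B⁻¹ * A) * C).trace := by
  set W := B⁻¹ * A
  have hA : A = B * W := (mul_nonsing_inv_cancel_left B A ((isUnit_iff_isUnit_det B).mp hB')).symm
  have hA' : Aᴴ = Wᴴ * B := by rw [hA, conjTranspose_mul, hB.eq]
  have hopt : (C * Aᴴ * B⁻¹ * A).trace = (Wᴴ * B * W * C).trace := by
    rw [← hA', Matrix.mul_assoc _ B⁻¹, Matrix.mul_assoc C, trace_mul_comm C]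
  rw [hopt, hA']
  exact re_trace_two_smul_sub_eq_sub hB hC W Y

theorem re_trace_two_smul_sub_le {B : Matrix m m 𝕜} {C : Matrix n n 𝕜}
    (hB : B.PosDef) (hC : C.PosSemidef) (A Y : Matrix m n 𝕜) :
    RCLike.re ((2 : 𝕜) • (Aᴴ * Y * C) - Yᴴ * B * Y * C).trace ≤
      RCLike.re (C * Aᴴ * B⁻¹ * A).trace := by
  rw [re_trace_two_smul_sub_eq_sub_inv_mul hB.isHermitian hB.isUnit hC.isHermitian]
  have hsq := (hB.posSemidef.conjTranspose_mul_mul_same (Y - B⁻¹ * A)).trace_mul_nonneg hC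
  linarith [(RCLike.nonneg_iff.mp hsq).1]

theorem re_trace_two_smul_sub_at_inv_mul {B : Matrix m m 𝕜} {C : Matrix n n 𝕜}
    (hB : B.IsHermitian) (hB' : IsUnit B) (hC : C.IsHermitian) (A : Matrix m n 𝕜) :
    RCLike.re ((2 : 𝕜) • (Aᴴ * (B⁻¹ * A) * C) - (B⁻¹ * A)ᴴ * B * (B⁻¹ * A) * C).trace =
      RCLike.re (C * Aᴴ * B⁻¹ * A).trace := by
  rw [re_trace_two_smul_sub_eq_sub_inv_mul hB hB' hC, sub_self]
  simp

end Matrix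

/-- Quadratic transform with matrix coefficients (Proposition 2): for positive
weights `ω_i`, Hermitian positive definite `B_i`, `C_i`, and matrices `A_i`, the
function `Y ↦ Σ_i ω_i Re tr(2 A_iᴴ Y_i C_i − Y_iᴴ B_i Y_i C_i)` is upper bounded by
`Σ_i ω_i Re tr(C_i A_iᴴ B_i⁻¹ A_i)`, with equality at `Y_i = B_i⁻¹ A_i`; hence the
supremum over `Y` of the left-hand side equals the right-hand side. -/
theorem quadratic_transform {n m d : ℕ}
    (ω : Fin n → ℝ) (hω : ∀ i, 0 < ω i)
    (B : Fin n → Matrix (Fin m) (Fin m) ℂ) (hB : ∀ i, (B i).PosDef)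
    (C : Fin n → Matrix (Fin d) (Fin d) ℂ) (hC : ∀ i, (C i).PosDef)
    (A : Fin n → Matrix (Fin m) (Fin d) ℂ) :
    (∀ Y : Fin n → Matrix (Fin m) (Fin d) ℂ,
      ∑ i, ω i *
          (Matrix.trace ((2 : ℂ) • ((A i)ᴴ * Y i * C i) - (Y i)ᴴ * B i * Y i * C i)).re ≤
        ∑ i, ω i * (Matrix.trace (C i * (A i)ᴴ * (B i)⁻¹ * A i)).re) ∧
    (∑ i, ω i *
        (Matrix.trace ((2 : ℂ) • ((A i)ᴴ * ((B i)⁻¹ * A i) * C i)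
            - ((B i)⁻¹ * A i)ᴴ * B i * ((B i)⁻¹ * A i) * C i)).re =
      ∑ i, ω i * (Matrix.trace (C i * (A i)ᴴ * (B i)⁻¹ * A i)).re) ∧
    IsGreatest
      {v : ℝ | ∃ Y : Fin n → Matrix (Fin m) (Fin d) ℂ,
        v = ∑ i, ω i *
            (Matrix.trace ((2 : ℂ) • ((A i)ᴴ * Y i * C i) - (Y i)ᴴ * B i * Y i * C i)).re}
      (∑ i, ω i * (Matrix.trace (C i * (A i)ᴴ * (B i)⁻¹ * A i)).re) := by
  have hle (Y : Fin n → Matrix (Fin m) (Fin d) ℂ) :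
      ∑ i, ω i *
          (Matrix.trace ((2 : ℂ) • ((A i)ᴴ * Y i * C i) - (Y i)ᴴ * B i * Y i * C i)).re ≤
        ∑ i, ω i * (Matrix.trace (C i * (A i)ᴴ * (B i)⁻¹ * A i)).re :=
    Finset.sum_le_sum fun i _ ↦ mul_le_mul_of_nonneg_left
      (re_trace_two_smul_sub_le (hB i) (hC i).posSemidef (A i) (Y i)) (hω i).le
  have heq : ∑ i, ω i *
        (Matrix.trace ((2 : ℂ) • ((A i)ᴴ * ((B i)⁻¹ * A i) * C i)
            - ((B i)⁻¹ * A i)ᴴ * B i * ((B i)⁻¹ * A i) * C i)).re =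
      ∑ i, ω i * (Matrix.trace (C i * (A i)ᴴ * (B i)⁻¹ * A i)).re :=
    Finset.sum_congr rfl fun i _ ↦ congrArg (ω i * ·)
      (re_trace_two_smul_sub_at_inv_mul (hB i).isHermitian (hB i).isUnit (hC i).isHermitian (A i))
  exact ⟨hle, heq, ⟨_, heq.symm⟩, by rintro _ ⟨Y, rfl⟩; exact hle Y⟩
end

section
/- Let B be an m×m complex Hermitian positive definite matrix, C a d×d complex Hermitian positive definite matrix, and A an m×d complex matrix. If an m×d complex matrix Y satisfies Re tr(2 Aᴴ Y C − Yᴴ B Y C) = Re tr(C Aᴴ B⁻¹ A), then Y = B⁻¹ A; i.e., the maximizer of Y ↦ Re tr(2 Aᴴ Y C − Yᴴ B Y C) is unique and equals B⁻¹A. -/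
/-!
Completing the square: with `Z = Y - B⁻¹ A`, `Re tr(2 Aᴴ Y C - Yᴴ B Y C)` equals
`Re tr(C Aᴴ B⁻¹ A) - Re tr(Zᴴ B Z C)`. Factoring `B = Pᴴ P` and `C = Q Qᴴ` with `P`, `Q`
invertible, `tr(Zᴴ B Z C) = tr(Nᴴ N)` for `N = P Z Q`, whose vanishing forces `N = 0`,
hence `Z = 0`.
-/

open Matrix
open scoped ComplexOrder

namespace Matrix

variable {𝕜 : Type*} [RCLike 𝕜] {m n : Type*} [Fintype m]

lemma re_trace_conjTranspose_mul_mul_comm [Fintype n] {C : Matrix n n 𝕜} (hC : C.IsHermitian)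
    (A Y : Matrix m n 𝕜) : RCLike.re (Yᴴ * A * C).trace = RCLike.re (Aᴴ * Y * C).trace := by
  rw [← RCLike.conj_re, starRingEnd_apply, ← trace_conjTranspose, trace_mul_comm]
  simp only [conjTranspose_mul, conjTranspose_conjTranspose, hC.eq, Matrix.mul_assoc]

lemma IsHermitian.conjTranspose_sub_inv_mul_mul_mul_sub_inv_mul [DecidableEq m]
    {B : Matrix m m 𝕜} (hB : B.IsHermitian) (hdet : IsUnit B.det) (A Y : Matrix m n 𝕜) :
    (Y - B⁻¹ * A)ᴴ * B * (Y - B⁻¹ * A) =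
      Yᴴ * B * Y - Yᴴ * A - Aᴴ * Y + Aᴴ * B⁻¹ * A := by
  simp only [conjTranspose_sub, conjTranspose_mul, conjTranspose_nonsing_inv, hB.eq,
    Matrix.sub_mul, Matrix.mul_sub, Matrix.mul_assoc, mul_nonsing_inv_cancel_left _ _ hdet,
    nonsing_inv_mul_cancel_left _ _ hdet]
  abel

lemma re_trace_two_smul_sub_eq [Fintype n] [DecidableEq m] {B : Matrix m m 𝕜}
    (hB : B.IsHermitian) (hdet : IsUnit B.det) {C : Matrix n n 𝕜} (hC : C.IsHermitian)
    (A Y : Matrix m n 𝕜) :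
    RCLike.re ((2 : 𝕜) • (Aᴴ * Y * C) - Yᴴ * B * Y * C).trace =
      RCLike.re (C * Aᴴ * B⁻¹ * A).trace -
        RCLike.re ((Y - B⁻¹ * A)ᴴ * B * (Y - B⁻¹ * A) * C).trace := by
  have hcycle : (C * Aᴴ * B⁻¹ * A).trace = (Aᴴ * B⁻¹ * A * C).trace := by
    rw [trace_mul_comm (Aᴴ * B⁻¹ * A) C]
    simp only [Matrix.mul_assoc]
  rw [hB.conjTranspose_sub_inv_mul_mul_mul_sub_inv_mul hdet, hcycle]
  simp only [Matrix.add_mul, Matrix.sub_mul, trace_add, trace_sub, trace_smul, map_add, map_sub,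
    smul_eq_mul, RCLike.ofNat_mul_re, re_trace_conjTranspose_mul_mul_comm hC]
  ring

section Factorization

open scoped MatrixOrder

variable [DecidableEq m] {A : Matrix m m 𝕜}

lemma PosDef.exists_isUnit_eq_conjTranspose_mul_self (hA : A.PosDef) :
    ∃ P : Matrix m m 𝕜, IsUnit P ∧ A = Pᴴ * P :=
  CStarAlgebra.isStrictlyPositive_iff_eq_star_mul_self.mp hA.isStrictlyPositive

lemma PosDef.exists_isUnit_eq_mul_conjTranspose_self (hA : A.PosDef) :
    ∃ P : Matrix m m 𝕜, IsUnit P ∧ A = P * Pᴴ :=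
  CStarAlgebra.isStrictlyPositive_iff_eq_mul_star_self.mp hA.isStrictlyPositive

end Factorization

lemma eq_zero_of_re_trace_conjTranspose_mul_self_eq_zero [Fintype n] {N : Matrix m n 𝕜}
    (h : RCLike.re (Nᴴ * N).trace = 0) : N = 0 := by
  have hN := RCLike.nonneg_iff.mp (posSemidef_conjTranspose_mul_self N).trace_nonneg
  rw [← trace_conjTranspose_mul_self_eq_zero_iff]
  exact RCLike.ext (by simpa using h) (by simpa using hN.2)

lemma eq_zero_of_re_trace_conjTranspose_mul_mul_mul_eq_zero [Fintype n] [DecidableEq m]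
    [DecidableEq n] {B : Matrix m m 𝕜} {C : Matrix n n 𝕜} (hB : B.PosDef) (hC : C.PosDef)
    {Z : Matrix m n 𝕜} (h : RCLike.re (Zᴴ * B * Z * C).trace = 0) : Z = 0 := by
  obtain ⟨P, hP, rfl⟩ := hB.exists_isUnit_eq_conjTranspose_mul_self
  obtain ⟨Q, hQ, rfl⟩ := hC.exists_isUnit_eq_mul_conjTranspose_self
  have hPZQ : P * Z * Q = 0 := by
    refine eq_zero_of_re_trace_conjTranspose_mul_self_eq_zero ?_
    have hcycle : (P * Z * Q)ᴴ * (P * Z * Q) = Qᴴ * (Zᴴ * (Pᴴ * P) * Z * Q) := by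
      simp only [conjTranspose_mul, Matrix.mul_assoc]
    rwa [hcycle, trace_mul_comm, Matrix.mul_assoc _ Q]
  calc Z = P⁻¹ * (P * Z * Q * Q⁻¹) := by
        rw [mul_nonsing_inv_cancel_right _ _ ((isUnit_iff_isUnit_det Q).mp hQ),
          nonsing_inv_mul_cancel_left _ _ ((isUnit_iff_isUnit_det P).mp hP)]
    _ = 0 := by rw [hPZQ, Matrix.zero_mul, Matrix.mul_zero]

end Matrix

/-- Uniqueness of the maximizer in the quadratic transform (Proposition 2): if `B`
and `C` are Hermitian positive definite and `Y` attains the maximum value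
`Re tr(C Aᴴ B⁻¹ A)` of `Y ↦ Re tr(2 Aᴴ Y C − Yᴴ B Y C)`, then `Y = B⁻¹ A`. -/
theorem quadratic_transform_unique_maximizer {m d : ℕ}
    (B : Matrix (Fin m) (Fin m) ℂ) (hB : B.PosDef)
    (C : Matrix (Fin d) (Fin d) ℂ) (hC : C.PosDef)
    (A Y : Matrix (Fin m) (Fin d) ℂ)
    (hY : (Matrix.trace ((2 : ℂ) • (Aᴴ * Y * C) - Yᴴ * B * Y * C)).re =
      (Matrix.trace (C * Aᴴ * B⁻¹ * A)).re) :
    Y = B⁻¹ * A := by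
  have hsquare := re_trace_two_smul_sub_eq hB.isHermitian
    ((isUnit_iff_isUnit_det B).mp hB.isUnit) hC.isHermitian A Y
  simp only [RCLike.re_to_complex] at hsquare
  have hgap : RCLike.re ((Y - B⁻¹ * A)ᴴ * B * (Y - B⁻¹ * A) * C).trace = 0 := by
    rw [RCLike.re_to_complex]
    linarith
  exact sub_eq_zero.mp (eq_zero_of_re_trace_conjTranspose_mul_mul_mul_eq_zero hB hC hgap)
end

section
/- Let B be an m×m complex Hermitian positive definite matrix, S an m×d complex matrix, and set M = Sᴴ B⁻¹ S. Then for every d×d complex Hermitian positive semidefinite matrix Γ, log det(I_d + Γ) − Re tr(Γ) + Re tr((I_d + Γ) · Sᴴ (S Sᴴ + B)⁻¹ S) ≤ log det(I_d + M), where log det denotes the real logarithm of the (positive real) determinant; moreover, equality holds when Γ = M. Consequently, the supremum of the left-hand side over positive semidefinite Hermitian Γ equals log det(I_d + M). -/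
/-!
By the Woodbury identity, `Sᴴ (S Sᴴ + B)⁻¹ S = I - P⁻¹` with `P = I + Sᴴ B⁻¹ S`, so the objective
equals `log det (I + Γ) + d - tr ((I + Γ) P⁻¹)`. For positive definite `A` and `P`,
`log det A ≤ log det P + tr (A P⁻¹) - d` is `log λ ≤ λ - 1` summed over the eigenvalues of
`Y A Yᴴ`, where `P⁻¹ = Yᴴ Y`; at `A = P` both sides agree.
-/

open Matrix
open scoped ComplexOrder

namespace Matrix

variable {n 𝕜 : Type*} [Fintype n] [DecidableEq n] [RCLike 𝕜]

theorem mul_add_mul_inv_mul_eq_one_sub_inv {m α : Type*} [Fintype m] [DecidableEq m] [CommRing α]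
    {B : Matrix m m α} (T : Matrix n m α) (S : Matrix m n α) (hB : IsUnit B)
    (h : IsUnit (S * T + B)) : T * (S * T + B)⁻¹ * S = 1 - (1 + T * B⁻¹ * S)⁻¹ := by
  have hB' : IsUnit B.det := (isUnit_iff_isUnit_det B).mp hB
  have woodbury := add_mul_mul_inv_eq_sub (1 : Matrix n n α) T B⁻¹ S
    isUnit_one (isUnit_nonsing_inv_iff.mpr hB)
    (by rwa [nonsing_inv_nonsing_inv B hB', inv_one, Matrix.mul_one, add_comm])
  rw [woodbury, nonsing_inv_nonsing_inv B hB', inv_one, Matrix.mul_one, Matrix.one_mul,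
    Matrix.mul_one, add_comm B, sub_sub_cancel]

theorem IsHermitian.ofReal_re_det {A : Matrix n n 𝕜} (hA : A.IsHermitian) :
    ((RCLike.re A.det : ℝ) : 𝕜) = A.det := by
  rw [hA.det_eq_prod_eigenvalues, ← RCLike.ofReal_prod, RCLike.ofReal_re]

theorem IsHermitian.re_det_mul {A : Matrix n n 𝕜} (hA : A.IsHermitian) (B : Matrix n n 𝕜) :
    RCLike.re (A * B).det = RCLike.re A.det * RCLike.re B.det := by
  rw [det_mul, ← hA.ofReal_re_det, RCLike.re_ofReal_mul, RCLike.ofReal_re]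

namespace PosDef

theorem re_det_pos {A : Matrix n n 𝕜} (hA : A.PosDef) : 0 < RCLike.re A.det :=
  (RCLike.pos_iff.mp hA.det_pos).1

theorem log_re_det_le_re_trace_sub_card {A : Matrix n n 𝕜} (hA : A.PosDef) :
    Real.log (RCLike.re A.det) ≤ RCLike.re A.trace - Fintype.card n := by
  have hpos := hA.eigenvalues_pos
  rw [hA.isHermitian.det_eq_prod_eigenvalues, hA.isHermitian.trace_eq_sum_eigenvalues,
    ← RCLike.ofReal_prod, ← RCLike.ofReal_sum, RCLike.ofReal_re, RCLike.ofReal_re,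
    Real.log_prod fun i _ => (hpos i).ne']
  calc ∑ i, Real.log (hA.isHermitian.eigenvalues i)
      ≤ ∑ i, (hA.isHermitian.eigenvalues i - 1) :=
        Finset.sum_le_sum fun i _ => Real.log_le_sub_one_of_pos (hpos i)
    _ = ∑ i, hA.isHermitian.eigenvalues i - Fintype.card n := by simp [Finset.sum_sub_distrib]

open scoped MatrixOrder in
theorem log_re_det_le_add_re_trace_mul_inv_sub_card {A P : Matrix n n 𝕜} (hA : A.PosDef)
    (hP : P.PosDef) :
    Real.log (RCLike.re A.det) ≤
      Real.log (RCLike.re P.det) + RCLike.re (A * P⁻¹).trace - Fintype.card n := by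
  obtain ⟨Y, hY⟩ := CStarAlgebra.nonneg_iff_eq_star_mul_self.mp hP.inv.posSemidef.nonneg
  rw [star_eq_conjTranspose] at hY
  have hYunit : IsUnit Y := isUnit_of_mul_isUnit_right (hY ▸ hP.inv.isUnit)
  have hX : (Y * A * Yᴴ).PosDef :=
    hA.mul_mul_conjTranspose_same (vecMul_injective_iff_isUnit.mpr hYunit)
  have htrace : (Y * A * Yᴴ).trace = (A * P⁻¹).trace := by
    rw [trace_mul_cycle, hY, ← Matrix.mul_assoc, trace_mul_cycle, Matrix.mul_assoc]
  have hdet : A.det = ((Y * A * Yᴴ) * P).det := by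
    have hYP : Yᴴ.det * Y.det * P.det = 1 := by
      rw [← det_mul, ← det_mul, ← hY, nonsing_inv_mul _ ((isUnit_iff_isUnit_det P).mp hP.isUnit),
        det_one]
    rw [det_mul, det_mul, det_mul]
    linear_combination -A.det * hYP
  rw [hdet, hX.isHermitian.re_det_mul, Real.log_mul hX.re_det_pos.ne' hP.re_det_pos.ne', ← htrace]
  linarith [hX.log_re_det_le_re_trace_sub_card]

end PosDef

noncomputable def dualObjective (K Γ : Matrix n n 𝕜) : ℝ :=
  Real.log (RCLike.re (1 + Γ).det) - RCLike.re Γ.trace + RCLike.re ((1 + Γ) * K).trace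

theorem dualObjective_one_sub_inv (Γ P : Matrix n n 𝕜) :
    dualObjective (1 - P⁻¹) Γ =
      Real.log (RCLike.re (1 + Γ).det) + Fintype.card n - RCLike.re ((1 + Γ) * P⁻¹).trace := by
  simp only [dualObjective, Matrix.mul_sub, Matrix.mul_one, trace_sub, trace_add, trace_one,
    map_sub, map_add, RCLike.natCast_re]
  ring

theorem PosSemidef.dualObjective_one_sub_inv_le {Γ P : Matrix n n 𝕜} (hΓ : Γ.PosSemidef)
    (hP : P.PosDef) : dualObjective (1 - P⁻¹) Γ ≤ Real.log (RCLike.re P.det) := by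
  rw [dualObjective_one_sub_inv]
  linarith [(PosDef.one.add_posSemidef hΓ).log_re_det_le_add_re_trace_mul_inv_sub_card hP]

theorem dualObjective_one_sub_inv_one_add {Γ : Matrix n n 𝕜} (h : IsUnit (1 + Γ)) :
    dualObjective (1 - (1 + Γ)⁻¹) Γ = Real.log (RCLike.re (1 + Γ).det) := by
  rw [dualObjective_one_sub_inv, mul_nonsing_inv _ ((isUnit_iff_isUnit_det _).mp h), trace_one]
  simp only [RCLike.natCast_re, add_sub_cancel_right]

end Matrix

/-- Lagrangian dual transform, per-ratio form (Proposition 1): for Hermitian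
positive definite `B` and `M = Sᴴ B⁻¹ S`, every Hermitian positive semidefinite `Γ`
satisfies `log det(I + Γ) − Re tr(Γ) + Re tr((I + Γ)·Sᴴ(S Sᴴ + B)⁻¹S) ≤ log det(I + M)`,
with equality at `Γ = M`; hence the supremum over such `Γ` equals `log det(I + M)`. -/
theorem lagrangian_dual_transform {m d : ℕ}
    (B : Matrix (Fin m) (Fin m) ℂ) (hB : B.PosDef)
    (S : Matrix (Fin m) (Fin d) ℂ) :
    (∀ Γ : Matrix (Fin d) (Fin d) ℂ, Γ.PosSemidef →
      Real.log ((1 + Γ).det.re) - (Matrix.trace Γ).re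
          + (Matrix.trace ((1 + Γ) * (Sᴴ * (S * Sᴴ + B)⁻¹ * S))).re ≤
        Real.log ((1 + Sᴴ * B⁻¹ * S).det.re)) ∧
    (Real.log ((1 + Sᴴ * B⁻¹ * S).det.re) - (Matrix.trace (Sᴴ * B⁻¹ * S)).re
        + (Matrix.trace ((1 + Sᴴ * B⁻¹ * S) * (Sᴴ * (S * Sᴴ + B)⁻¹ * S))).re =
      Real.log ((1 + Sᴴ * B⁻¹ * S).det.re)) ∧
    IsGreatest
      {v : ℝ | ∃ Γ : Matrix (Fin d) (Fin d) ℂ, Γ.PosSemidef ∧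
        v = Real.log ((1 + Γ).det.re) - (Matrix.trace Γ).re
            + (Matrix.trace ((1 + Γ) * (Sᴴ * (S * Sᴴ + B)⁻¹ * S))).re}
      (Real.log ((1 + Sᴴ * B⁻¹ * S).det.re)) := by
  set M := Sᴴ * B⁻¹ * S
  have hM : M.PosSemidef := hB.inv.posSemidef.conjTranspose_mul_mul_same S
  have hP : (1 + M).PosDef := PosDef.one.add_posSemidef hM
  have hSB : (S * Sᴴ + B).PosDef := PosDef.posSemidef_add (posSemidef_self_mul_conjTranspose S) hB
  rw [mul_add_mul_inv_mul_eq_one_sub_inv Sᴴ S hB.isUnit hSB.isUnit]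
  have bound (Γ : Matrix (Fin d) (Fin d) ℂ) (hΓ : Γ.PosSemidef) :=
    hΓ.dualObjective_one_sub_inv_le hP
  have attained := dualObjective_one_sub_inv_one_add hP.isUnit
  exact ⟨bound, attained, ⟨M, hM, attained.symm⟩, by rintro v ⟨Γ, hΓ, rfl⟩; exact bound Γ hΓ⟩
end
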